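/- Let β > 1 and let F_β be the class of functions on [0,1) defined from the Haar-type system as in the context. Then there is a constant c > 0, depending only on β, such that g_n(F_β) ≥ c · n^{−1/2} · (log n)^{−β+1} for all n ≥ 2, where the sampling numbers are taken in L₂([0,1)) with Lebesgue measure. -/

import Mathlib

/-!
Statement 15 (Example): For `β > 1`, the class `F_β` built from the dyadic indicator
system on `[0,1)` with level-wise coefficient constraint
`∑_{k=1}^{2^ℓ} |c_{ℓ,k}|² ≤ (ℓ+1)^{−2β}` satisfies
`g_n(F_β) ≥ c n^{−1/2} (log n)^{−β+1}` for all `n ≥ 2`, for a constant `c = c(β) > 0`,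
where the sampling numbers are taken in `L₂([0,1))` with Lebesgue measure.
-/

open MeasureTheory ENNReal

noncomputable section

/-- The unit interval `[0,1)` as a subtype of `ℝ`. -/
abbrev UnitIco : Type := Set.Ico (0 : ℝ) 1

/-- Lebesgue measure on `[0,1)`. -/
def μ01 : Measure UnitIco := MeasureTheory.Measure.comap Subtype.val volume

/-- Sampling numbers in `L₂(μ)`. -/
def sampNum {D : Type*} [MeasurableSpace D] (μ : Measure D)
    (F : Set (D → ℂ)) (n : ℕ) : ℝ≥0∞ :=
  ⨅ (x : Fin n → D) (φ : Fin n → D → ℂ) (_ : ∀ i, MemLp (φ i) 2 μ),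
    ⨆ f ∈ F, eLpNorm (fun t => f t - ∑ i, f (x i) * φ i t) 2 μ

/-- `χ ℓ k` is the indicator function of the dyadic interval
`I_{ℓ,k} = [(k−1) 2^{−ℓ}, k 2^{−ℓ}) ⊂ [0,1)`. -/
def dyadicChi (ℓ k : ℕ) : UnitIco → ℂ := fun x =>
  if ((k : ℝ) - 1) / 2 ^ ℓ ≤ (x : ℝ) ∧ (x : ℝ) < (k : ℝ) / 2 ^ ℓ then 1 else 0

/-- The class `F_β`: all functions `f_c = ∑_{ℓ,k} c_{ℓ,k} χ_{ℓ,k}` with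
`∑_{k=1}^{2^ℓ} |c_{ℓ,k}|² ≤ (ℓ+1)^{−2β}` for all `ℓ ∈ ℕ₀`. -/
def Fβ (β : ℝ) : Set (UnitIco → ℂ) :=
  { f | ∃ c : ℕ → ℕ → ℂ,
      (∀ ℓ : ℕ, ∑ k ∈ Finset.Icc 1 (2 ^ ℓ), ‖c ℓ k‖ ^ 2 ≤ ((ℓ : ℝ) + 1) ^ (-(2 * β))) ∧
      f = fun x => ∑' ℓ : ℕ, ∑ k ∈ Finset.Icc 1 (2 ^ ℓ), c ℓ k * dyadicChi ℓ k x }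

/-!
Given sample points `x₁, …, x_n`, let `L = ⌊log₂ n⌋ + 2` and `a_ℓ = (ℓ+1)^{-β} n^{-1/2}`. From the
constant `v = ∑_{L ≤ ℓ < 2L} a_ℓ` subtract, at every level `ℓ ∈ [L, 2L)`, the spike `a_ℓ χ_{ℓ,k}` on
each interval `I_{ℓ,k}` that contains a sample point. At most `n` intervals per level are touched,
so the level budget `n a_ℓ² = (ℓ+1)^{-2β}` is respected. The resulting function vanishes at every
sample point, so any linear algorithm built on these points returns `0` for it, yet it equals `v`
off the at most `n` sampled intervals of level `L`, a set of measure at least `1/2`. Hence the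
error is at least `v/2 ≥ L (2L)^{-β} n^{-1/2} / 2 ≳ n^{-1/2} (log n)^{1-β}`.
-/

open Finset

namespace HaarSampling

/-- `t ∈ I_{ℓ, dyadicIndex ℓ t + 1}`: the index is 0-based, the labels `k` of `dyadicChi` are
1-based. -/
def dyadicIndex (ℓ : ℕ) (t : UnitIco) : ℕ := ⌊(t : ℝ) * 2 ^ ℓ⌋₊

lemma dyadicIndex_lt (ℓ : ℕ) (t : UnitIco) : dyadicIndex ℓ t < 2 ^ ℓ := by
  rw [dyadicIndex, Nat.floor_lt (mul_nonneg t.2.1 (by positivity))]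
  push_cast
  exact mul_lt_of_lt_one_left (by positivity) t.2.2

lemma dyadicIndex_eq_div {L ℓ : ℕ} (h : L ≤ ℓ) (t : UnitIco) :
    dyadicIndex L t = dyadicIndex ℓ t / 2 ^ (ℓ - L) := by
  rw [dyadicIndex, dyadicIndex, ← Nat.floor_div_natCast]
  congr 1
  push_cast
  rw [_root_.eq_div_iff (by positivity), mul_assoc, ← pow_add, Nat.add_sub_cancel' h]

lemma dyadicChi_eq_ite (ℓ k : ℕ) (t : UnitIco) :
    dyadicChi ℓ k t = if k = dyadicIndex ℓ t + 1 then 1 else 0 := by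
  have ht : 0 ≤ (t : ℝ) * 2 ^ ℓ := mul_nonneg t.2.1 (by positivity)
  have key : ((k : ℝ) - 1) / 2 ^ ℓ ≤ t ∧ (t : ℝ) < k / 2 ^ ℓ ↔ k = dyadicIndex ℓ t + 1 := by
    rw [div_le_iff₀ (by positivity), lt_div_iff₀ (by positivity)]
    constructor
    · rintro ⟨hlo, hhi⟩
      have hlt : dyadicIndex ℓ t < k := (Nat.floor_lt ht).2 hhi
      have hle : k - 1 ≤ dyadicIndex ℓ t :=
        Nat.le_floor (by rw [Nat.cast_sub (by omega), Nat.cast_one]; exact hlo)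
      omega
    · rintro rfl
      push_cast
      exact ⟨(add_sub_cancel_right _ _).trans_le (Nat.floor_le ht), Nat.lt_floor_add_one _⟩
  simp only [dyadicChi, key]

lemma sum_mul_dyadicChi (c : ℕ → ℂ) (ℓ : ℕ) (t : UnitIco) :
    ∑ k ∈ Icc 1 (2 ^ ℓ), c k * dyadicChi ℓ k t = c (dyadicIndex ℓ t + 1) := by
  simp only [dyadicChi_eq_ite, mul_ite, mul_one, mul_zero, sum_ite_eq', mem_Icc]
  exact if_pos ⟨Nat.le_add_left 1 _, dyadicIndex_lt ℓ t⟩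

lemma measurable_dyadicIndex (ℓ : ℕ) : Measurable (dyadicIndex ℓ) := by
  unfold dyadicIndex
  fun_prop

lemma setOf_dyadicIndex_eq (ℓ K : ℕ) :
    {t | dyadicIndex ℓ t = K} = (↑) ⁻¹' Set.Ico ((K : ℝ) / 2 ^ ℓ) ((K + 1) / 2 ^ ℓ) := by
  ext t
  rw [Set.mem_ofPred_eq, dyadicIndex, Nat.floor_eq_iff (mul_nonneg t.2.1 (by positivity)),
    Set.mem_preimage, Set.mem_Ico, div_le_iff₀ (by positivity), lt_div_iff₀ (by positivity)]

lemma μ01_apply (s : Set UnitIco) : μ01 s = volume ((↑) '' s : Set ℝ) :=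
  comap_subtype_coe_apply measurableSet_Ico volume s

instance : IsProbabilityMeasure μ01 :=
  ⟨by rw [μ01_apply, Set.image_univ, Subtype.range_coe, Real.volume_Ico]; norm_num⟩

lemma μ01_setOf_dyadicIndex_eq_le (ℓ K : ℕ) :
    μ01 {t | dyadicIndex ℓ t = K} ≤ (2 ^ ℓ)⁻¹ := by
  rw [setOf_dyadicIndex_eq, μ01_apply]
  calc volume _ ≤ volume (Set.Ico ((K : ℝ) / 2 ^ ℓ) ((K + 1) / 2 ^ ℓ)) :=
        measure_mono (Set.image_preimage_subset _ _)
    _ = (2 ^ ℓ)⁻¹ := by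
        rw [Real.volume_Ico, ← sub_div, add_sub_cancel_left, one_div,
          ENNReal.ofReal_inv_of_pos (by positivity)]
        norm_num

section Fooling

variable {n : ℕ} (x : Fin n → UnitIco)

def sampledCells (ℓ : ℕ) : Finset ℕ := univ.image fun i => dyadicIndex ℓ (x i) + 1

def sampledRegion (ℓ : ℕ) : Set UnitIco := {t | dyadicIndex ℓ t + 1 ∈ sampledCells x ℓ}

lemma card_sampledCells_le (ℓ : ℕ) : #(sampledCells x ℓ) ≤ n :=
  card_image_le.trans_eq (card_fin n)

lemma sampledRegion_eq_iUnion (ℓ : ℕ) :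
    sampledRegion x ℓ = ⋃ i, {t | dyadicIndex ℓ t = dyadicIndex ℓ (x i)} := by
  ext t
  simp [sampledRegion, sampledCells, eq_comm]

lemma measurableSet_sampledRegion (ℓ : ℕ) : MeasurableSet (sampledRegion x ℓ) :=
  measurable_dyadicIndex ℓ (MeasurableSet.of_discrete (s := {k | k + 1 ∈ sampledCells x ℓ}))

lemma μ01_sampledRegion_le {L : ℕ} (hL : 2 * n ≤ 2 ^ L) : μ01 (sampledRegion x L) ≤ 2⁻¹ :=
  calc μ01 (sampledRegion x L)
      ≤ ∑ i, μ01 {t | dyadicIndex L t = dyadicIndex L (x i)} := by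
        rw [sampledRegion_eq_iUnion]
        exact measure_iUnion_fintype_le _ _
    _ ≤ ∑ _ : Fin n, (2 ^ L)⁻¹ := sum_le_sum fun i _ => μ01_setOf_dyadicIndex_eq_le _ _
    _ = n / 2 ^ L := by simp [div_eq_mul_inv]
    _ ≤ 2⁻¹ := by
        rw [ENNReal.div_le_iff (by positivity) (by simp), ← ENNReal.div_eq_inv_mul,
          ENNReal.le_div_iff_mul_le (by simp) (by simp), mul_comm]
        exact_mod_cast hL

lemma inv_two_le_μ01_compl_sampledRegion {L : ℕ} (hL : 2 * n ≤ 2 ^ L) :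
    2⁻¹ ≤ μ01 (sampledRegion x L)ᶜ :=
  calc 2⁻¹ = 1 - (2⁻¹ : ℝ≥0∞) := ENNReal.one_sub_inv_two.symm
    _ ≤ 1 - μ01 (sampledRegion x L) := tsub_le_tsub_left (μ01_sampledRegion_le x hL) 1
    _ = μ01 (sampledRegion x L)ᶜ := (prob_compl_eq_one_sub (measurableSet_sampledRegion x L)).symm

variable (S : Finset ℕ) (a : ℕ → ℝ)

def foolingCoeff (ℓ k : ℕ) : ℂ :=
  if ℓ = 0 then ((∑ j ∈ S, a j : ℝ) : ℂ)
  else if ℓ ∈ S ∧ k ∈ sampledCells x ℓ then -(a ℓ : ℂ) else 0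

def foolingFunction (t : UnitIco) : ℂ :=
  ∑' ℓ, ∑ k ∈ Icc 1 (2 ^ ℓ), foolingCoeff x S a ℓ k * dyadicChi ℓ k t

variable {S}

lemma foolingFunction_apply (h0 : 0 ∉ S) (t : UnitIco) :
    foolingFunction x S a t =
      ((∑ ℓ ∈ S with dyadicIndex ℓ t + 1 ∉ sampledCells x ℓ, a ℓ : ℝ) : ℂ) := by
  have hsupp : ∀ ℓ ∉ insert 0 S,
      ∑ k ∈ Icc 1 (2 ^ ℓ), foolingCoeff x S a ℓ k * dyadicChi ℓ k t = 0 := by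
    intro ℓ hℓ
    rw [mem_insert, not_or] at hℓ
    rw [sum_mul_dyadicChi, foolingCoeff, if_neg hℓ.1, if_neg fun h => hℓ.2 h.1]
  have hS : ∀ ℓ ∈ S, foolingCoeff x S a ℓ (dyadicIndex ℓ t + 1) =
      if dyadicIndex ℓ t + 1 ∈ sampledCells x ℓ then -(a ℓ : ℂ) else 0 := fun ℓ hℓ => by
    rw [foolingCoeff, if_neg (ne_of_mem_of_not_mem hℓ h0), if_congr (and_iff_right hℓ) rfl rfl]
  rw [foolingFunction, tsum_eq_sum hsupp, sum_insert h0]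
  simp only [sum_mul_dyadicChi]
  rw [sum_congr rfl hS, foolingCoeff, if_pos rfl, ← sum_filter_add_sum_filter_not S
    (fun ℓ => dyadicIndex ℓ t + 1 ∈ sampledCells x ℓ), sum_ite, sum_const_zero]
  push_cast
  rw [sum_neg_distrib]
  ring

lemma foolingFunction_apply_sample (h0 : 0 ∉ S) (i : Fin n) :
    foolingFunction x S a (x i) = 0 := by
  rw [foolingFunction_apply x a h0, filter_false_of_mem, sum_empty, Complex.ofReal_zero]
  exact fun ℓ _ h => h (mem_image_of_mem _ (mem_univ i))

lemma foolingFunction_apply_of_notMem_sampledRegion (h0 : 0 ∉ S) {L : ℕ}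
    (hS : ∀ ℓ ∈ S, L ≤ ℓ) {t : UnitIco} (ht : t ∉ sampledRegion x L) :
    foolingFunction x S a t = ((∑ ℓ ∈ S, a ℓ : ℝ) : ℂ) := by
  rw [foolingFunction_apply x a h0, filter_true_of_mem]
  intro ℓ hℓ hmem
  obtain ⟨i, -, hi⟩ := mem_image.1 hmem
  refine ht (mem_image.2 ⟨i, mem_univ i, ?_⟩)
  rw [dyadicIndex_eq_div (hS ℓ hℓ), dyadicIndex_eq_div (hS ℓ hℓ) t, Nat.succ_injective hi]

lemma foolingFunction_mem_Fβ (β : ℝ) (hv : |∑ ℓ ∈ S, a ℓ| ≤ 1)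
    (ha : ∀ ℓ ∈ S, n * a ℓ ^ 2 ≤ ((ℓ : ℝ) + 1) ^ (-(2 * β))) :
    foolingFunction x S a ∈ Fβ β := by
  refine ⟨foolingCoeff x S a, fun ℓ => ?_, rfl⟩
  rcases eq_or_ne ℓ 0 with rfl | hℓ0
  · simpa [foolingCoeff, ← Complex.ofReal_sum, sq_abs] using hv
  by_cases hℓ : ℓ ∈ S
  · calc ∑ k ∈ Icc 1 (2 ^ ℓ), ‖foolingCoeff x S a ℓ k‖ ^ 2
        = ∑ k ∈ Icc 1 (2 ^ ℓ), if k ∈ sampledCells x ℓ then a ℓ ^ 2 else 0 := by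
          refine sum_congr rfl fun k _ => ?_
          split_ifs with hk <;> simp [foolingCoeff, hℓ0, hℓ, hk]
      _ = #(Icc 1 (2 ^ ℓ) ∩ sampledCells x ℓ) * a ℓ ^ 2 := by
          rw [sum_ite_mem, sum_const, nsmul_eq_mul]
      _ ≤ n * a ℓ ^ 2 := by
          gcongr
          exact_mod_cast (card_le_card inter_subset_right).trans (card_sampledCells_le x ℓ)
      _ ≤ _ := ha ℓ hℓ
  · simp only [foolingCoeff, hℓ0, hℓ, if_false, false_and, norm_zero, zero_pow two_ne_zero,
      sum_const_zero]
    positivity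

end Fooling

lemma enorm_mul_measure_rpow_le_eLpNorm {α E : Type*} [MeasurableSpace α]
    [NormedAddCommGroup E] {μ : Measure α} {p : ℝ≥0∞} (hp : p ≠ 0) (hp_top : p ≠ ∞)
    {s : Set α} (hs : MeasurableSet s) {f : α → E} {c : E} (hf : ∀ t ∈ s, ‖c‖ ≤ ‖f t‖) :
    ‖c‖ₑ * μ s ^ (1 / p.toReal) ≤ eLpNorm f p μ := by
  rw [← eLpNorm_indicator_const hs hp hp_top]
  refine eLpNorm_mono fun t => ?_
  by_cases ht : t ∈ s
  · simpa [ht] using hf t ht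
  · simp [ht]

lemma ofReal_half_le_eLpNorm_foolingFunction {n : ℕ} (x : Fin n → UnitIco) {S : Finset ℕ}
    (a : ℕ → ℝ) (h0 : 0 ∉ S) {L : ℕ} (hS : ∀ ℓ ∈ S, L ≤ ℓ) (hL : 2 * n ≤ 2 ^ L)
    (hv : 0 ≤ ∑ ℓ ∈ S, a ℓ) :
    ENNReal.ofReal ((∑ ℓ ∈ S, a ℓ) / 2) ≤ eLpNorm (foolingFunction x S a) 2 μ01 := by
  set U := (sampledRegion x L)ᶜ
  have hhalf : (2⁻¹ : ℝ≥0∞) ≤ μ01 U ^ (1 / 2 : ℝ) :=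
    calc (2⁻¹ : ℝ≥0∞) = 2⁻¹ ^ (1 : ℝ) := (ENNReal.rpow_one _).symm
      _ ≤ 2⁻¹ ^ (1 / 2 : ℝ) := ENNReal.rpow_le_rpow_of_exponent_ge (by norm_num) (by norm_num)
      _ ≤ μ01 U ^ (1 / 2 : ℝ) :=
          ENNReal.rpow_le_rpow (inv_two_le_μ01_compl_sampledRegion x hL) (by norm_num)
  calc ENNReal.ofReal ((∑ ℓ ∈ S, a ℓ) / 2) = ‖((∑ ℓ ∈ S, a ℓ : ℝ) : ℂ)‖ₑ * 2⁻¹ := by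
        rw [div_eq_mul_inv, ENNReal.ofReal_mul hv, ← ofReal_norm, Complex.norm_real,
          Real.norm_of_nonneg hv, ENNReal.ofReal_inv_of_pos two_pos, ENNReal.ofReal_ofNat]
    _ ≤ ‖((∑ ℓ ∈ S, a ℓ : ℝ) : ℂ)‖ₑ * μ01 U ^ (1 / (2 : ℝ≥0∞).toReal) := by
        rw [ENNReal.toReal_ofNat]
        gcongr
    _ ≤ eLpNorm (foolingFunction x S a) 2 μ01 :=
        enorm_mul_measure_rpow_le_eLpNorm two_ne_zero ofNat_ne_top
          (measurableSet_sampledRegion x L).compl fun _ ht =>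
            (congrArg norm (foolingFunction_apply_of_notMem_sampledRegion x a h0 hS ht)).ge

lemma le_sampNum_of_forall_exists_vanishing {D : Type*} [MeasurableSpace D] {μ : Measure D}
    {F : Set (D → ℂ)} {n : ℕ} {ε : ℝ≥0∞}
    (h : ∀ x : Fin n → D, ∃ f ∈ F, (∀ i, f (x i) = 0) ∧ ε ≤ eLpNorm f 2 μ) :
    ε ≤ sampNum μ F n := by
  refine le_iInf₂ fun x φ => le_iInf fun _ => ?_
  obtain ⟨f, hfF, hfx, hε⟩ := h x
  refine hε.trans (le_of_eq_of_le ?_ (le_iSup₂ (f := fun g (_ : g ∈ F) =>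
    eLpNorm (fun t => g t - ∑ i, g (x i) * φ i t) 2 μ) f hfF))
  simp [hfx]

def level (n : ℕ) : ℕ := Nat.log 2 n + 2

lemma two_mul_le_two_pow_level (n : ℕ) : 2 * n ≤ 2 ^ level n := by
  have := Nat.lt_pow_succ_log_self one_lt_two n
  rw [level, pow_succ]
  omega

lemma level_le_five_mul_log {n : ℕ} (hn : 2 ≤ n) : (level n : ℝ) ≤ 5 * Real.log n := by
  have hpow : 2 ^ level n ≤ n ^ 3 :=
    calc 2 ^ level n = 2 ^ Nat.log 2 n * 4 := by rw [level, pow_add]; norm_num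
      _ ≤ n * (n * n) := Nat.mul_le_mul (Nat.pow_log_le_self 2 (by omega)) (by nlinarith)
      _ = n ^ 3 := by ring
  have hlog : level n * Real.log 2 ≤ 3 * Real.log n := by
    rw [← Real.log_pow,
      show (3 : ℝ) * Real.log n = Real.log (n ^ 3) by rw [Real.log_pow]; norm_num]
    exact Real.log_le_log (by positivity) (by exact_mod_cast hpow)
  have hlog2 := Real.log_two_gt_d9
  have hlogn : 0 ≤ Real.log n := Real.log_nonneg (by exact_mod_cast (by omega : 1 ≤ n))
  nlinarith [Nat.cast_nonneg (α := ℝ) (level n)]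

section Weights

variable (β : ℝ) (n : ℕ)

def weight (ℓ : ℕ) : ℝ := ((ℓ : ℝ) + 1) ^ (-β) * (n : ℝ) ^ (-(1 / 2) : ℝ)

lemma weight_nonneg (ℓ : ℕ) : 0 ≤ weight β n ℓ := by
  unfold weight
  positivity

lemma natCast_mul_weight_sq (hn : n ≠ 0) (ℓ : ℕ) :
    n * weight β n ℓ ^ 2 = ((ℓ : ℝ) + 1) ^ (-(2 * β)) := by
  have hn' : (0 : ℝ) < n := by positivity
  rw [weight, mul_pow, ← Real.rpow_mul_natCast (by positivity),
    ← Real.rpow_mul_natCast hn'.le, Nat.cast_two, show -(1 / 2 : ℝ) * 2 = -1 by norm_num,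
    Real.rpow_neg_one, mul_left_comm, mul_inv_cancel₀ hn'.ne', mul_one, neg_mul, mul_comm]

lemma sum_weight_le_one (hβ : 1 ≤ β) (hn : n ≠ 0) (L : ℕ) :
    ∑ ℓ ∈ Ico L (2 * L), weight β n ℓ ≤ 1 := by
  have hterm : ∀ ℓ ∈ Ico L (2 * L), weight β n ℓ ≤ ((L : ℝ) + 1)⁻¹ := by
    intro ℓ hℓ
    have hLℓ : (L : ℝ) ≤ ℓ := by exact_mod_cast (mem_Ico.1 hℓ).1
    have hone : (1 : ℝ) ≤ (ℓ : ℝ) + 1 := by linarith [Nat.cast_nonneg (α := ℝ) ℓ]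
    calc weight β n ℓ ≤ ((ℓ : ℝ) + 1) ^ (-β) * 1 := by
          unfold weight
          gcongr
          exact Real.rpow_le_one_of_one_le_of_nonpos
            (by exact_mod_cast Nat.one_le_iff_ne_zero.2 hn) (by norm_num)
      _ ≤ ((ℓ : ℝ) + 1) ^ (-1 : ℝ) := by
          rw [mul_one]
          exact Real.rpow_le_rpow_of_exponent_le hone (by linarith)
      _ ≤ ((L : ℝ) + 1)⁻¹ := by
          rw [Real.rpow_neg_one]
          gcongr
  calc ∑ ℓ ∈ Ico L (2 * L), weight β n ℓ ≤ #(Ico L (2 * L)) • ((L : ℝ) + 1)⁻¹ :=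
        sum_le_card_nsmul _ _ _ hterm
    _ = L / (L + 1) := by
        rw [Nat.card_Ico, two_mul, Nat.add_sub_cancel, nsmul_eq_mul, div_eq_mul_inv]
    _ ≤ 1 := div_le_one_of_le₀ (by linarith) (by positivity)

lemma le_sum_weight (hβ : 0 ≤ β) {L : ℕ} (hL : 0 < L) :
    L * (2 * L : ℝ) ^ (-β) * (n : ℝ) ^ (-(1 / 2) : ℝ) ≤ ∑ ℓ ∈ Ico L (2 * L), weight β n ℓ := by
  have hterm : ∀ ℓ ∈ Ico L (2 * L),
      (2 * L : ℝ) ^ (-β) * (n : ℝ) ^ (-(1 / 2) : ℝ) ≤ weight β n ℓ := by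
    intro ℓ hℓ
    have hℓL : (ℓ : ℝ) + 1 ≤ 2 * L := by exact_mod_cast (mem_Ico.1 hℓ).2
    exact mul_le_mul_of_nonneg_right
      (Real.rpow_le_rpow_of_nonpos (by positivity) hℓL (by linarith)) (by positivity)
  have := card_nsmul_le_sum _ _ _ hterm
  rwa [Nat.card_Ico, show 2 * L - L = L by omega, nsmul_eq_mul, ← mul_assoc] at this

lemma le_sum_weight_level (hβ : 1 ≤ β) (hn : 2 ≤ n) :
    2 ^ (-β) * 5 ^ (-β + 1) * (n : ℝ) ^ (-(1 / 2) : ℝ) * Real.log n ^ (-β + 1) ≤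
      ∑ ℓ ∈ Ico (level n) (2 * level n), weight β n ℓ := by
  set L := level n
  have hL : (0 : ℝ) < L := Nat.cast_pos.2 (by simp [L, level])
  have hlog : 0 < Real.log n := Real.log_pos (by exact_mod_cast hn)
  have hLpow : (L : ℝ) * (2 * L) ^ (-β) = 2 ^ (-β) * L ^ (-β + 1) := by
    rw [Real.mul_rpow two_pos.le hL.le, Real.rpow_add hL, Real.rpow_one]
    ring
  have hmono : (5 * Real.log n) ^ (-β + 1) ≤ (L : ℝ) ^ (-β + 1) :=
    Real.rpow_le_rpow_of_nonpos hL (level_le_five_mul_log hn) (by linarith)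
  calc 2 ^ (-β) * 5 ^ (-β + 1) * (n : ℝ) ^ (-(1 / 2) : ℝ) * Real.log n ^ (-β + 1)
      = 2 ^ (-β) * (5 * Real.log n) ^ (-β + 1) * (n : ℝ) ^ (-(1 / 2) : ℝ) := by
        rw [Real.mul_rpow (by norm_num) hlog.le]
        ring
    _ ≤ 2 ^ (-β) * L ^ (-β + 1) * (n : ℝ) ^ (-(1 / 2) : ℝ) := by gcongr
    _ = L * (2 * L : ℝ) ^ (-β) * (n : ℝ) ^ (-(1 / 2) : ℝ) := by rw [hLpow]
    _ ≤ ∑ ℓ ∈ Ico L (2 * L), weight β n ℓ := le_sum_weight β n (by linarith) (by exact_mod_cast hL)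

end Weights

end HaarSampling

open HaarSampling

theorem statement15 (β : ℝ) (hβ : 1 < β) :
    ∃ c : ℝ, 0 < c ∧
      ∀ n : ℕ, 2 ≤ n →
        ENNReal.ofReal (c * (n : ℝ) ^ (-(1 / 2) : ℝ) * Real.log n ^ (-β + 1)) ≤
          sampNum μ01 (Fβ β) n := by
  refine ⟨2 ^ (-β) * 5 ^ (-β + 1) / 2, by positivity, fun n hn => ?_⟩
  set S := Ico (level n) (2 * level n)
  have hS0 : 0 ∉ S := by simp [S, level]
  have hSL : ∀ ℓ ∈ S, level n ≤ ℓ := fun ℓ hℓ => (mem_Ico.1 hℓ).1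
  have hv0 : 0 ≤ ∑ ℓ ∈ S, weight β n ℓ := sum_nonneg fun ℓ _ => weight_nonneg β n ℓ
  have hv1 := sum_weight_le_one β n hβ.le (by omega) (level n)
  have hlower := le_sum_weight_level β n hβ.le hn
  refine le_sampNum_of_forall_exists_vanishing fun x =>
    ⟨foolingFunction x S (weight β n), ?_, foolingFunction_apply_sample x _ hS0, ?_⟩
  · exact foolingFunction_mem_Fβ x _ β (abs_le.2 ⟨by linarith, hv1⟩)
      fun ℓ _ => (natCast_mul_weight_sq β n (by omega) ℓ).le
  · calc ENNReal.ofReal (2 ^ (-β) * 5 ^ (-β + 1) / 2 * (n : ℝ) ^ (-(1 / 2) : ℝ) *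
          Real.log n ^ (-β + 1)) ≤ ENNReal.ofReal ((∑ ℓ ∈ S, weight β n ℓ) / 2) :=
          ENNReal.ofReal_le_ofReal (by linarith)
      _ ≤ _ := ofReal_half_le_eLpNorm_foolingFunction x _ hS0 hSL (two_mul_le_two_pow_level n) hv0

end
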